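/- Let D and D'' be DAGs on the same vertex set V with |V| = n, both having path skeletons, and suppose the skeletons differ. Then for each edge {v_i, v_j} present in the skeleton of D but not in that of D'', the number of sets Z ⊆ V \ {v_i, v_j} such that v_i, v_j are d-connected given Z in D but d-separated given Z in D'' is 2^(n-2) - 2^(n-2-|Y|) ≥ 2^(n-3), where Y is the set of internal vertices of the unique v_i–v_j path in the skeleton of D''. Consequently, if the skeletons differ in t edges each way, the d-separation distance between D and D'' is at least 2t·2^(n-3). -/

import Mathlib

/-- A directed graph on `Fin n` is a binary relation; it is a DAG when it has no
directed cycle. -/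
def IsDAG {n : ℕ} (D : Fin n → Fin n → Prop) : Prop :=
  ∀ v, ¬ Relation.TransGen D v v

/-- The skeleton (underlying undirected graph) of a directed graph. -/
def Skel {n : ℕ} (D : Fin n → Fin n → Prop) : SimpleGraph (Fin n) where
  Adj a b := a ≠ b ∧ (D a b ∨ D b a)
  symm := ⟨fun a b h => ⟨h.1.symm, h.2.symm⟩⟩
  loopless := ⟨fun a h => h.1 rfl⟩

/-- `y` is a descendant of `x` (including `x` itself). -/
def Desc {n : ℕ} (D : Fin n → Fin n → Prop) (x y : Fin n) : Prop :=
  Relation.ReflTransGen D x y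

/-- A path (in the skeleton) from `u` to `v`, as a list of distinct vertices with
consecutive vertices adjacent in the skeleton. -/
def IsSkelPath {n : ℕ} (D : Fin n → Fin n → Prop) (u v : Fin n) (p : List (Fin n)) : Prop :=
  p.Nodup ∧ p.head? = some u ∧ p.getLast? = some v ∧
    p.Chain' (fun a b => D a b ∨ D b a)

/-- Position `i` of the list `p` is a collider: both neighboring arcs point into it. -/
def ColliderAt {n : ℕ} [NeZero n] (D : Fin n → Fin n → Prop) (p : List (Fin n)) (i : ℕ) : Prop :=
  D (p.getD (i - 1) default) (p.getD i default) ∧ D (p.getD (i + 1) default) (p.getD i default)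

/-- The path `p` is blocked by `Z`: some internal position is a non-collider in `Z`,
or a collider none of whose descendants (including itself) lies in `Z`. -/
def Blocked {n : ℕ} [NeZero n] (D : Fin n → Fin n → Prop) (Z : Finset (Fin n))
    (p : List (Fin n)) : Prop :=
  ∃ i : ℕ, 0 < i ∧ i + 1 < p.length ∧
    ((¬ ColliderAt D p i ∧ p.getD i default ∈ Z) ∨
      (ColliderAt D p i ∧ ∀ w, Desc D (p.getD i default) w → w ∉ Z))

/-- `u` and `v` are d-separated given `Z` in `D`. -/
def DSep {n : ℕ} [NeZero n] (D : Fin n → Fin n → Prop) (u v : Fin n)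
    (Z : Finset (Fin n)) : Prop :=
  ∀ p : List (Fin n), IsSkelPath D u v p → Blocked D Z p

/-- The d-separation distance between two directed graphs on `Fin n`: the number of
triples `(u, v, Z)` with `u < v` and `Z ⊆ V \ {u, v}` on which their d-separation
relations differ. -/
noncomputable def dSepDist {n : ℕ} [NeZero n] (D₁ D₂ : Fin n → Fin n → Prop) : ℕ :=
  Set.ncard {t : Fin n × Fin n × Finset (Fin n) |
    t.1 < t.2.1 ∧ t.1 ∉ t.2.2 ∧ t.2.1 ∉ t.2.2 ∧
    ¬ (DSep D₁ t.1 t.2.1 t.2.2 ↔ DSep D₂ t.1 t.2.1 t.2.2)}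

/-- A vertex is a collider (of a DAG with a path skeleton) if it has two distinct
parents. -/
def IsColliderVertex {n : ℕ} (D : Fin n → Fin n → Prop) (k : Fin n) : Prop :=
  ∃ a b, a ≠ b ∧ D a k ∧ D b k

/-- Two directed graphs entail the same d-separation relations. -/
def MarkovEquiv {n : ℕ} [NeZero n] (D₁ D₂ : Fin n → Fin n → Prop) : Prop :=
  ∀ (u v : Fin n) (Z : Finset (Fin n)), u ≠ v → u ∉ Z → v ∉ Z →
    (DSep D₁ u v Z ↔ DSep D₂ u v Z)

/-!
In a DAG whose skeleton is a path, a vertex with two parents has no further neighbour, hence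
no child, so it is its own only descendant. As skeleton paths are unique, `u` and `v` are then
d-separated by `Z` exactly when `Z ∩ Y` differs from the set of colliders in `Y`, the internal
vertices of the `u`–`v` path; this fails for `2 ^ (n - 2 - |Y|)` of the `2 ^ (n - 2)` admissible
sets `Z`. An edge `uv` of one skeleton that is missing from the other makes `u`, `v` d-connected
in the first DAG for every `Z`, so the pair contributes at least `2 ^ (n - 3)` triples to the
distance; both skeletons have `n - 1` edges, so there are `2 t` such pairs.
-/

open List SimpleGraph

theorem eq_range'_of_isChain_succ :
    ∀ {l : List ℕ}, l.IsChain (fun a b => a + 1 = b) → l = range' (l.headD 0) l.length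
  | [], _ => rfl
  | [_], _ => rfl
  | a :: b :: t, h => by
    obtain ⟨rfl, h⟩ := isChain_cons_cons.mp h
    rw [headD_cons, length_cons, range'_succ]
    exact congrArg (a :: ·) (eq_range'_of_isChain_succ h)

theorem isChain_succ_or_isChain_pred_of_nodup : ∀ {l : List ℕ}, l.Nodup →
    l.IsChain (fun a b => a + 1 = b ∨ b + 1 = a) →
    l.IsChain (fun a b => a + 1 = b) ∨ l.IsChain (fun a b => b + 1 = a)
  | [], _, _ => Or.inl .nil
  | [a], _, _ => Or.inl (isChain_singleton a)
  | [_, _], _, h => by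
    rcases isChain_pair.mp h with h | h
    · exact Or.inl (isChain_pair.mpr h)
    · exact Or.inr (isChain_pair.mpr h)
  | a :: b :: c :: t, hnd, h => by
    rw [isChain_cons_cons] at h
    have hac : a ≠ c := fun hac => by simp [hac] at hnd
    rcases h.1, isChain_succ_or_isChain_pred_of_nodup hnd.of_cons h.2 with ⟨hab | hab, ih | ih⟩
    · exact Or.inl (ih.cons_cons hab)
    · exact absurd (isChain_cons_cons.mp ih).1 (by omega)
    · exact absurd (isChain_cons_cons.mp ih).1 (by omega)
    · exact Or.inr (ih.cons_cons hab)

theorem eq_range'_of_isChain_succ_of_head?_of_getLast? {l : List ℕ} {u v : ℕ}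
    (hc : l.IsChain (fun a b => a + 1 = b)) (hu : l.head? = some u) (hv : l.getLast? = some v) :
    u ≤ v ∧ l = range' u (v + 1 - u) := by
  have hl := eq_range'_of_isChain_succ hc
  have hne : l ≠ [] := by rintro rfl; simp at hu
  have hhead : l.headD 0 = u := by rw [headD_eq_head?_getD, hu]; rfl
  rw [hhead] at hl
  have hlen := length_pos_iff.mpr hne
  have hlast : v = u + l.length - 1 := by
    rw [hl, getLast?_range', if_neg (by simpa using hne)] at hv
    exact (Option.some_injective _ hv).symm
  exact ⟨by omega, by rw [hl]; congr 1; omega⟩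

theorem eq_ite_range'_of_isChain_succ_or_pred {l : List ℕ} {u v : ℕ} (hnd : l.Nodup)
    (hc : l.IsChain (fun a b => a + 1 = b ∨ b + 1 = a))
    (hu : l.head? = some u) (hv : l.getLast? = some v) :
    l = if u ≤ v then range' u (v + 1 - u) else (range' v (u + 1 - v)).reverse := by
  rcases isChain_succ_or_isChain_pred_of_nodup hnd hc with hasc | hdesc
  · obtain ⟨huv, hl⟩ := eq_range'_of_isChain_succ_of_head?_of_getLast? hasc hu hv
    rw [if_pos huv, hl]
  · obtain ⟨hvu, hl⟩ := eq_range'_of_isChain_succ_of_head?_of_getLast?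
      (isChain_reverse.mpr hdesc) (by rwa [head?_reverse]) (by rwa [getLast?_reverse])
    rw [← reverse_inj, reverse_reverse] at hl
    split_ifs with huv
    · obtain rfl := le_antisymm hvu huv
      simpa using hl
    · exact hl

theorem Finset.inter_ne_filter_iff {α : Type*} [DecidableEq α] {Y Z : Finset α} {p : α → Prop}
    [DecidablePred p] : Z ∩ Y ≠ Y.filter p ↔ ∃ y ∈ Y, (y ∈ Z ↔ ¬ p y) := by
  rw [Ne, Finset.ext_iff]
  simp only [Finset.mem_inter, Finset.mem_filter, not_forall]
  constructor
  · rintro ⟨y, hy⟩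
    by_cases hyY : y ∈ Y
    · exact ⟨y, hyY, by tauto⟩
    · simp [hyY] at hy
  · rintro ⟨y, hyY, hy⟩
    exact ⟨y, by simp_all⟩

theorem Finset.card_filter_powerset_inter_eq {α : Type*} [DecidableEq α] {s Y Y' : Finset α}
    (hY : Y ⊆ s) (hY' : Y' ⊆ Y) :
    (s.powerset.filter fun Z => Z ∩ Y = Y').card = 2 ^ (s \ Y).card := by
  rw [← Finset.card_powerset (s \ Y)]
  refine Finset.card_nbij' (· \ Y) (· ∪ Y') ?_ ?_ ?_ ?_ <;> intro Z hZ <;>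
    simp only [Finset.coe_filter, Finset.coe_powerset, Set.mem_ofPred_eq, Set.mem_preimage,
      Finset.mem_powerset] at hZ ⊢
  · exact Finset.sdiff_subset_sdiff hZ.1 le_rfl
  · refine ⟨Finset.union_subset (hZ.trans Finset.sdiff_subset) (hY'.trans hY), ?_⟩
    rw [Finset.union_inter_distrib_right, Finset.inter_eq_left.mpr hY',
      Finset.disjoint_iff_inter_eq_empty.mp
        (Finset.disjoint_of_subset_left hZ Finset.sdiff_disjoint), Finset.empty_union]
  · rw [← hZ.2, Finset.sdiff_union_inter]
  · rw [Finset.union_sdiff_distrib, Finset.sdiff_eq_empty_iff_subset.mpr hY', Finset.union_empty,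
      Finset.sdiff_eq_self_of_disjoint (Finset.disjoint_of_subset_left hZ Finset.sdiff_disjoint)]

theorem ncard_setOf_notMem_inter_ne {α : Type*} [Fintype α] [DecidableEq α] {i j : α}
    (hij : i ≠ j) {Y Y' : Finset α} (hi : i ∉ Y) (hj : j ∉ Y) (hY' : Y' ⊆ Y) :
    {Z : Finset α | i ∉ Z ∧ j ∉ Z ∧ Z ∩ Y ≠ Y'}.ncard =
      2 ^ (Fintype.card α - 2) - 2 ^ (Fintype.card α - 2 - Y.card) := by
  set s : Finset α := Finset.univ \ {i, j}
  have hs : s.card = Fintype.card α - 2 := by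
    rw [Finset.card_univ_sdiff, Finset.card_pair hij]
  have hYs : Y ⊆ s := fun y hy => by
    simp only [s, Finset.mem_sdiff, Finset.mem_univ, Finset.mem_insert, Finset.mem_singleton,
      true_and]
    rintro (rfl | rfl) <;> contradiction
  have hset : {Z : Finset α | i ∉ Z ∧ j ∉ Z ∧ Z ∩ Y ≠ Y'} =
      ↑(s.powerset.filter fun Z => ¬ Z ∩ Y = Y') := by
    ext Z
    simp only [s, Set.mem_ofPred_eq, Finset.coe_filter, Finset.mem_powerset, Finset.subset_sdiff,
      Finset.subset_univ, Finset.disjoint_insert_right, Finset.disjoint_singleton_right, true_and,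
      and_assoc]
  rw [hset, Set.ncard_coe_finset, Finset.filter_not, Finset.card_sdiff_of_subset
    (Finset.filter_subset _ _), Finset.card_powerset, Finset.card_filter_powerset_inter_eq hYs hY',
    Finset.card_sdiff_of_subset hYs, hs]

theorem two_pow_sub_three_le {n k : ℕ} (hk : 1 ≤ k) (hkn : k + 2 ≤ n) :
    2 ^ (n - 3) ≤ 2 ^ (n - 2) - 2 ^ (n - 2 - k) := by
  have h1 : 2 ^ (n - 2 - k) ≤ 2 ^ (n - 3) := Nat.pow_le_pow_right two_pos (by omega)
  have h2 : 2 ^ (n - 2) = 2 ^ (n - 3) * 2 := by rw [← pow_succ]; congr 1; omega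
  omega

theorem Set.ncard_sdiff_union_sdiff {α : Type*} [Finite α] {s t : Set α}
    (h : s.ncard = t.ncard) : (s \ t ∪ t \ s).ncard = 2 * (s \ t).ncard := by
  rw [Set.ncard_union_eq disjoint_sdiff_sdiff,
    ← (Set.ncard_eq_ncard_iff_ncard_sdiff_eq_ncard_sdiff).mp h, two_mul]

section SkelPath

variable {n : ℕ} {D : Fin n → Fin n → Prop} {τ : Equiv.Perm (Fin n)} {u v w x a b : Fin n}
  {P Q : List (Fin n)}

theorem skel_adj_iff_of_eq_comap (hs : Skel D = (pathGraph n).comap τ) :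
    (Skel D).Adj u v ↔ (τ u : ℕ) + 1 = τ v ∨ (τ v : ℕ) + 1 = τ u := by
  rw [hs]
  exact pathGraph_adj

theorem eq_or_eq_of_skel_adj (hs : Skel D = (pathGraph n).comap τ) (ha : (Skel D).Adj x a)
    (hb : (Skel D).Adj x b) (hab : a ≠ b) (hw : (Skel D).Adj x w) : w = a ∨ w = b := by
  have hval : ∀ {c d : Fin n}, (τ c : ℕ) = τ d → c = d :=
    fun h => τ.injective (Fin.val_injective h)
  rw [skel_adj_iff_of_eq_comap hs] at ha hb hw
  have hab' : (τ a : ℕ) ≠ τ b := fun h => hab (hval h)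
  have : (τ w : ℕ) = τ a ∨ (τ w : ℕ) = τ b := by omega
  exact this.imp hval hval

theorem IsSkelPath.isChain_adj (hP : IsSkelPath D u v P) : P.IsChain (Skel D).Adj := by
  obtain ⟨hnd, -, -, hc⟩ := hP
  rw [Chain', isChain_iff_getElem] at hc
  rw [isChain_iff_getElem]
  exact fun m hm => ⟨fun h => by have := hnd.getElem_inj_iff.mp h; omega, hc m hm⟩

theorem IsSkelPath.eq (hs : Skel D = (pathGraph n).comap τ) (hP : IsSkelPath D u v P)
    (hQ : IsSkelPath D u v Q) : P = Q := by
  let f : Fin n → ℕ := fun x => τ x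
  have hf : Function.Injective f := Fin.val_injective.comp τ.injective
  have canon : ∀ R, IsSkelPath D u v R → R.map f =
      if f u ≤ f v then range' (f u) (f v + 1 - f u)
      else (range' (f v) (f u + 1 - f v)).reverse :=
    fun R hR => eq_ite_range'_of_isChain_succ_or_pred (hR.1.map hf)
      (isChain_map_of_isChain f (fun _ _ h => (skel_adj_iff_of_eq_comap hs).mp h) hR.isChain_adj)
      (by rw [head?_map, hR.2.1]; rfl) (by rw [getLast?_map, hR.2.2.1]; rfl)
  exact map_injective_iff.mpr hf (by rw [canon P hP, canon Q hQ])

theorem IsSkelPath.ne_nil (hP : IsSkelPath D u v P) : P ≠ [] := by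
  rintro rfl
  simp [IsSkelPath] at hP

theorem IsSkelPath.getElem_zero (hP : IsSkelPath D u v P) :
    P[0]'(length_pos_iff.mpr hP.ne_nil) = u := by
  rw [← head_eq_getElem hP.ne_nil]
  exact Option.some_injective _ (by rw [← hP.2.1, head?_eq_some_head hP.ne_nil])

theorem IsSkelPath.getElem_length_sub_one (hP : IsSkelPath D u v P) :
    P[P.length - 1]'(by have := length_pos_iff.mpr hP.ne_nil; omega) = v := by
  rw [← getLast_eq_getElem hP.ne_nil]
  exact Option.some_injective _ (by rw [← hP.2.2.1, getLast?_eq_some_getLast hP.ne_nil])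

theorem IsSkelPath.mem_internal_iff [NeZero n] (hP : IsSkelPath D u v P) :
    x ∈ P.toFinset \ {u, v} ↔ ∃ m, 0 < m ∧ m + 1 < P.length ∧ P.getD m default = x := by
  have hlen := length_pos_iff.mpr hP.ne_nil
  have hinj : ∀ {k l} (hk : k < P.length) (hl : l < P.length), P[k] = P[l] → k = l :=
    fun hk hl h => hP.1.getElem_inj_iff.mp h
  simp only [Finset.mem_sdiff, mem_toFinset, Finset.mem_insert, Finset.mem_singleton, not_or]
  constructor
  · rintro ⟨hx, hxu, hxv⟩
    obtain ⟨m, hm, rfl⟩ := mem_iff_getElem.mp hx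
    have h0 : m ≠ 0 := by rintro rfl; exact hxu hP.getElem_zero
    have h1 : m ≠ P.length - 1 := by rintro rfl; exact hxv hP.getElem_length_sub_one
    exact ⟨m, by omega, by omega, getD_eq_getElem _ _ hm⟩
  · rintro ⟨m, hm0, hm1, rfl⟩
    rw [getD_eq_getElem _ _ (by omega)]
    refine ⟨getElem_mem _, fun h => ?_, fun h => ?_⟩
    · have := hinj _ _ (h.trans hP.getElem_zero.symm); omega
    · have := hinj _ _ (h.trans hP.getElem_length_sub_one.symm); omega

theorem IsSkelPath.internal_nonempty [NeZero n] (hP : IsSkelPath D u v P) (huv : u ≠ v)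
    (hnadj : ¬ (Skel D).Adj u v) : (P.toFinset \ {u, v}).Nonempty := by
  suffices h : 3 ≤ P.length from ⟨_, hP.mem_internal_iff.mpr ⟨1, one_pos, h, rfl⟩⟩
  match P, hP with
  | [_], hP => exact absurd (hP.getElem_zero.symm.trans hP.getElem_length_sub_one) huv
  | [a, b], hP =>
    have ha : a = u := hP.getElem_zero
    have hb : b = v := hP.getElem_length_sub_one
    subst ha hb
    exact absurd (isChain_pair.mp hP.isChain_adj) hnadj
  | _ :: _ :: _ :: _, _ => simp

theorem not_rel_of_isColliderVertex (hD : IsDAG D) (hs : Skel D = (pathGraph n).comap τ)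
    (hx : IsColliderVertex D x) (w : Fin n) : ¬ D x w := by
  obtain ⟨a, b, hab, ha, hb⟩ := hx
  have adj_of_rel : ∀ {c}, D c x → (Skel D).Adj x c :=
    fun hc => ⟨by rintro rfl; exact hD x (.single hc), Or.inr hc⟩
  intro hw
  have hxw : (Skel D).Adj x w := ⟨by rintro rfl; exact hD x (.single hw), Or.inl hw⟩
  rcases eq_or_eq_of_skel_adj hs (adj_of_rel ha) (adj_of_rel hb) hab hxw with rfl | rfl
  · exact hD x (.tail (.single hw) ha)
  · exact hD x (.tail (.single hw) hb)

theorem eq_of_desc_of_isColliderVertex (hD : IsDAG D) (hs : Skel D = (pathGraph n).comap τ)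
    (hx : IsColliderVertex D x) (hw : Desc D x w) : w = x := by
  rcases hw.cases_head with h | ⟨c, hc, -⟩
  · exact h.symm
  · exact absurd hc (not_rel_of_isColliderVertex hD hs hx c)

theorem IsSkelPath.colliderAt_iff [NeZero n] (hD : IsDAG D)
    (hs : Skel D = (pathGraph n).comap τ) (hP : IsSkelPath D u v P) {m : ℕ} (hm0 : 0 < m)
    (hm1 : m + 1 < P.length) :
    ColliderAt D P m ↔ IsColliderVertex D (P.getD m default) := by
  have hadj := isChain_iff_getElem.mp hP.isChain_adj
  have hl : (Skel D).Adj P[m] P[m - 1] := by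
    have := hadj (m - 1) (by omega)
    simp only [Nat.sub_add_cancel hm0] at this
    exact this.symm
  have hr : (Skel D).Adj P[m] P[m + 1] := hadj m hm1
  have hlr : P[m - 1] ≠ P[m + 1] := fun h => by have := hP.1.getElem_inj_iff.mp h; omega
  rw [ColliderAt, getD_eq_getElem _ _ (by omega), getD_eq_getElem _ _ (by omega),
    getD_eq_getElem _ _ hm1]
  refine ⟨fun ⟨h1, h2⟩ => ⟨_, _, hlr, h1, h2⟩, fun ⟨a, b, hab, ha, hb⟩ => ?_⟩
  have adj_of_rel : ∀ {c}, D c P[m] → (Skel D).Adj P[m] c :=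
    fun hc => ⟨by rintro rfl; exact hD _ (.single hc), Or.inr hc⟩
  rcases eq_or_eq_of_skel_adj hs hl hr hlr (adj_of_rel ha) with rfl | rfl <;>
    rcases eq_or_eq_of_skel_adj hs hl hr hlr (adj_of_rel hb) with rfl | rfl
  exacts [absurd rfl hab, ⟨ha, hb⟩, ⟨hb, ha⟩, absurd rfl hab]

theorem IsSkelPath.blocked_iff [NeZero n] (hD : IsDAG D) (hs : Skel D = (pathGraph n).comap τ)
    (hP : IsSkelPath D u v P) (Z : Finset (Fin n)) :
    Blocked D Z P ↔ ∃ x ∈ P.toFinset \ {u, v}, (x ∈ Z ↔ ¬ IsColliderVertex D x) := by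
  have blocks_iff : ∀ {m}, 0 < m → m + 1 < P.length →
      (((¬ ColliderAt D P m ∧ P.getD m default ∈ Z) ∨
        (ColliderAt D P m ∧ ∀ w, Desc D (P.getD m default) w → w ∉ Z)) ↔
      (P.getD m default ∈ Z ↔ ¬ IsColliderVertex D (P.getD m default))) := by
    intro m hm0 hm1
    rw [hP.colliderAt_iff hD hs hm0 hm1]
    by_cases hc : IsColliderVertex D (P.getD m default)
    · have hdesc : (∀ w, Desc D (P.getD m default) w → w ∉ Z) ↔ P.getD m default ∉ Z :=
        ⟨fun h => h _ .refl, fun h w hw => eq_of_desc_of_isColliderVertex hD hs hc hw ▸ h⟩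
      simp only [hc, hdesc, not_true_eq_false, false_and, true_and, false_or, iff_false]
    · simp only [hc, not_false_eq_true, true_and, false_and, or_false, iff_true]
  simp only [Blocked, hP.mem_internal_iff]
  constructor
  · rintro ⟨m, hm0, hm1, h⟩
    exact ⟨_, ⟨m, hm0, hm1, rfl⟩, (blocks_iff hm0 hm1).mp h⟩
  · rintro ⟨_, ⟨m, hm0, hm1, rfl⟩, h⟩
    exact ⟨m, hm0, hm1, (blocks_iff hm0 hm1).mpr h⟩

end SkelPath

section DSep

variable {n : ℕ} [NeZero n] {D : Fin n → Fin n → Prop} {τ : Equiv.Perm (Fin n)} {u v : Fin n}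
  {P : List (Fin n)}

open Classical in
theorem IsSkelPath.dSep_iff (hD : IsDAG D) (hs : Skel D = (pathGraph n).comap τ)
    (hP : IsSkelPath D u v P) (Z : Finset (Fin n)) :
    DSep D u v Z ↔
      Z ∩ (P.toFinset \ {u, v}) ≠ (P.toFinset \ {u, v}).filter (IsColliderVertex D) := by
  rw [Finset.inter_ne_filter_iff, ← hP.blocked_iff hD hs]
  exact ⟨fun h => h P hP, fun h Q hQ => hQ.eq hs hP ▸ h⟩

theorem not_dSep_of_adj (hadj : (Skel D).Adj u v) (Z : Finset (Fin n)) : ¬ DSep D u v Z := by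
  intro h
  obtain ⟨m, hm0, hm1, -⟩ := h [u, v] ⟨by simp [hadj.ne], rfl, rfl, isChain_pair.mpr hadj.2⟩
  simp only [length_cons, length_nil] at hm1
  omega

end DSep

section Count

variable {n : ℕ} {D D₁ D₂ : Fin n → Fin n → Prop} {τ : Equiv.Perm (Fin n)} {u v : Fin n}
  {P : List (Fin n)}

theorem SimpleGraph.Walk.IsPath.isSkelPath {p : (Skel D).Walk u v} (hp : p.IsPath) :
    IsSkelPath D u v p.support :=
  ⟨hp.support_nodup, by rw [← p.cons_tail_support]; rfl,
    by rw [getLast?_eq_some_getLast (by simp), p.getLast_support],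
    p.isChain_adj_support.imp fun _ _ h => h.2⟩

theorem exists_isSkelPath (hs : Skel D = (pathGraph n).comap τ) (u v : Fin n) :
    ∃ P, IsSkelPath D u v P := by
  have hpre : (Skel D).Preconnected := by
    rw [hs]
    exact (Iso.comap τ _).preconnected_iff.mpr (pathGraph_preconnected n)
  obtain ⟨p⟩ := hpre u v
  exact ⟨_, p.toPath.2.isSkelPath⟩

theorem ncard_edgeSet_skel (hs : Skel D = (pathGraph n).comap τ) :
    (Skel D).edgeSet.ncard = (pathGraph n).edgeSet.ncard := by
  rw [hs, ← Nat.card_coe_set_eq, ← Nat.card_coe_set_eq]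
  exact Nat.card_congr (Iso.comap τ _).mapEdgeSet

theorem card_sdiff_pair_add_two_le (s : Finset (Fin n)) (huv : u ≠ v) :
    (s \ {u, v}).card + 2 ≤ n := by
  calc (s \ {u, v}).card + 2 = (s \ {u, v}).card + ({u, v} : Finset _).card := by
        rw [Finset.card_pair huv]
    _ = (s ∪ {u, v}).card := Finset.card_sdiff_add_card _ _
    _ ≤ n := (Finset.card_le_univ _).trans_eq (Fintype.card_fin n)

theorem IsSkelPath.two_pow_sub_three_le_of_not_adj [NeZero n] (hP : IsSkelPath D u v P)
    (huv : u ≠ v) (hnadj : ¬ (Skel D).Adj u v) :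
    2 ^ (n - 3) ≤ 2 ^ (n - 2) - 2 ^ (n - 2 - (P.toFinset \ {u, v}).card) :=
  two_pow_sub_three_le (hP.internal_nonempty huv hnadj).card_pos (card_sdiff_pair_add_two_le _ huv)

theorem IsSkelPath.ncard_dSep [NeZero n] (hD : IsDAG D) (hs : Skel D = (pathGraph n).comap τ)
    (hP : IsSkelPath D u v P) (huv : u ≠ v) :
    {Z : Finset (Fin n) | u ∉ Z ∧ v ∉ Z ∧ DSep D u v Z}.ncard =
      2 ^ (n - 2) - 2 ^ (n - 2 - (P.toFinset \ {u, v}).card) := by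
  classical
  simp only [hP.dSep_iff hD hs]
  rw [ncard_setOf_notMem_inter_ne huv (by simp) (by simp) (Finset.filter_subset _ _),
    Fintype.card_fin]

variable [NeZero n]

def dSepDisagreements (D₁ D₂ : Fin n → Fin n → Prop) (u v : Fin n) : Set (Finset (Fin n)) :=
  {Z | u ∉ Z ∧ v ∉ Z ∧ ¬ (DSep D₁ u v Z ↔ DSep D₂ u v Z)}

theorem dSepDisagreements_comm :
    dSepDisagreements D₁ D₂ u v = dSepDisagreements D₂ D₁ u v := by
  simp only [dSepDisagreements, iff_comm]

theorem dSepDisagreements_eq_of_adj (hadj : (Skel D₁).Adj u v) :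
    dSepDisagreements D₁ D₂ u v = {Z | u ∉ Z ∧ v ∉ Z ∧ DSep D₂ u v Z} := by
  ext Z
  simp [dSepDisagreements, not_dSep_of_adj hadj Z]

theorem two_pow_sub_three_le_ncard_dSepDisagreements (hD₂ : IsDAG D₂)
    (hs₂ : Skel D₂ = (pathGraph n).comap τ) (hadj : (Skel D₁).Adj u v)
    (hnadj : ¬ (Skel D₂).Adj u v) : 2 ^ (n - 3) ≤ (dSepDisagreements D₁ D₂ u v).ncard := by
  obtain ⟨P, hP⟩ := exists_isSkelPath hs₂ u v
  rw [dSepDisagreements_eq_of_adj hadj, hP.ncard_dSep hD₂ hs₂ hadj.ne]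
  exact hP.two_pow_sub_three_le_of_not_adj hadj.ne hnadj

end Count

section Distance

variable {n : ℕ} [NeZero n] {D₁ D₂ : Fin n → Fin n → Prop}

theorem ncard_mul_le_dSepDist {E : Set (Sym2 (Fin n))} {k : ℕ}
    (hE : ∀ a b, s(a, b) ∈ E → a ≠ b ∧ k ≤ (dSepDisagreements D₁ D₂ a b).ncard) :
    E.ncard * k ≤ dSepDist D₁ D₂ := by
  classical
  have hE' : ∀ e ∈ E,
      e.inf < e.sup ∧ k ≤ (dSepDisagreements D₁ D₂ e.inf e.sup).ncard := by
    intro e he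
    have he' : s(e.inf, e.sup) = e := Sym2.sortEquiv.symm_apply_apply e
    obtain ⟨hne, hk⟩ := hE _ _ (he'.symm ▸ he)
    exact ⟨lt_of_le_of_ne e.inf_le_sup hne, hk⟩
  -- an unordered pair `e` is counted in `dSepDist` once, as `(e.inf, e.sup)`
  let T : Finset (Σ _ : Sym2 (Fin n), Finset (Fin n)) :=
    E.toFinset.sigma fun e => (dSepDisagreements D₁ D₂ e.inf e.sup).toFinset
  calc E.ncard * k = E.toFinset.card • k := by rw [Set.ncard_eq_toFinset_card', smul_eq_mul]
    _ ≤ ∑ e ∈ E.toFinset, (dSepDisagreements D₁ D₂ e.inf e.sup).toFinset.card :=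
        Finset.card_nsmul_le_sum _ _ _ fun e he => by
          rw [← Set.ncard_eq_toFinset_card']
          exact (hE' e (Set.mem_toFinset.mp he)).2
    _ = (T : Set (Σ _ : Sym2 (Fin n), Finset (Fin n))).ncard := by
        rw [Set.ncard_coe_finset, Finset.card_sigma]
    _ ≤ dSepDist D₁ D₂ := by
        refine Set.ncard_le_ncard_of_injOn (fun x => (x.1.inf, x.1.sup, x.2)) ?_ ?_
          (Set.toFinite _)
        · rintro ⟨e, Z⟩ hx
          simp only [T, Finset.mem_coe, Finset.mem_sigma, Set.mem_toFinset] at hx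
          exact ⟨(hE' e hx.1).1, hx.2⟩
        · rintro ⟨e, Z⟩ - ⟨e', Z'⟩ - h
          simp only [Prod.mk.injEq] at h
          obtain ⟨hinf, hsup, rfl⟩ := h
          obtain rfl := Sym2.inf_eq_inf_and_sup_eq_sup.mp ⟨hinf, hsup⟩
          rfl

end Distance

theorem different_path_skeletons_far_general {n : ℕ} [NeZero n]
    (D D'' : Fin n → Fin n → Prop) (hD : IsDAG D) (hD'' : IsDAG D'')
    (σ τ : Equiv.Perm (Fin n))
    (hs : Skel D = (SimpleGraph.pathGraph n).comap ⇑σ)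
    (hs'' : Skel D'' = (SimpleGraph.pathGraph n).comap ⇑τ) :
    (∀ i j : Fin n, (Skel D).Adj i j → ¬ (Skel D'').Adj i j →
      ∀ p : (Skel D'').Walk i j, p.IsPath →
        Set.ncard {Z : Finset (Fin n) | i ∉ Z ∧ j ∉ Z ∧ ¬ DSep D i j Z ∧ DSep D'' i j Z} =
            2 ^ (n - 2) - 2 ^ (n - 2 - (p.support.toFinset \ {i, j}).card) ∧
          2 ^ (n - 3) ≤ 2 ^ (n - 2) - 2 ^ (n - 2 - (p.support.toFinset \ {i, j}).card)) ∧
    2 * ((Skel D).edgeSet \ (Skel D'').edgeSet).ncard * 2 ^ (n - 3) ≤ dSepDist D D'' := by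
  refine ⟨fun i j hadj hnadj p hp => ?_, ?_⟩
  · have hset : {Z : Finset (Fin n) | i ∉ Z ∧ j ∉ Z ∧ ¬ DSep D i j Z ∧ DSep D'' i j Z} =
        {Z | i ∉ Z ∧ j ∉ Z ∧ DSep D'' i j Z} := by
      ext Z
      simp [not_dSep_of_adj hadj Z]
    rw [hset, hp.isSkelPath.ncard_dSep hD'' hs'' hadj.ne]
    exact ⟨rfl, hp.isSkelPath.two_pow_sub_three_le_of_not_adj hadj.ne hnadj⟩
  · have hcard : (Skel D).edgeSet.ncard = (Skel D'').edgeSet.ncard := by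
      rw [ncard_edgeSet_skel hs, ncard_edgeSet_skel hs'']
    rw [← Set.ncard_sdiff_union_sdiff hcard]
    refine ncard_mul_le_dSepDist fun a b hab => ?_
    simp only [Set.mem_union, Set.mem_sdiff, mem_edgeSet] at hab
    rcases hab with ⟨h, h''⟩ | ⟨h'', h⟩
    · exact ⟨h.ne, two_pow_sub_three_le_ncard_dSepDisagreements hD'' hs'' h h''⟩
    · rw [dSepDisagreements_comm]
      exact ⟨h''.ne, two_pow_sub_three_le_ncard_dSepDisagreements hD hs h'' h⟩

theorem different_path_skeletons_far {n : ℕ} [NeZero n] (hn : 3 ≤ n)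
    (D D'' : Fin n → Fin n → Prop) (hD : IsDAG D) (hD'' : IsDAG D'')
    (σ τ : Equiv.Perm (Fin n))
    (hs : Skel D = (SimpleGraph.pathGraph n).comap ⇑σ)
    (hs'' : Skel D'' = (SimpleGraph.pathGraph n).comap ⇑τ)
    (hne : Skel D ≠ Skel D'') :
    (∀ i j : Fin n, (Skel D).Adj i j → ¬ (Skel D'').Adj i j →
      ∀ p : (Skel D'').Walk i j, p.IsPath →
        Set.ncard {Z : Finset (Fin n) | i ∉ Z ∧ j ∉ Z ∧ ¬ DSep D i j Z ∧ DSep D'' i j Z} =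
            2 ^ (n - 2) - 2 ^ (n - 2 - (p.support.toFinset \ {i, j}).card) ∧
          2 ^ (n - 3) ≤ 2 ^ (n - 2) - 2 ^ (n - 2 - (p.support.toFinset \ {i, j}).card)) ∧
    2 * ((Skel D).edgeSet \ (Skel D'').edgeSet).ncard * 2 ^ (n - 3) ≤ dSepDist D D'' :=
  different_path_skeletons_far_general D D'' hD hD'' σ τ hs hs''
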